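/- Let K be a field of characteristic different from 2, let L₁/K and L₂/K be two linearly disjoint quadratic field extensions, and let L = L₁ ⊗_K L₂. Then K×² · N_{L/K}(L×) = N_{L₁/K}(L₁×) ∩ N_{L₂/K}(L₂×). -/

import Mathlib

open scoped TensorProduct

/-- A (finite-dimensional) quadratic form over the field `K`, bundled with its
underlying vector space. -/
structure QF (K : Type) [Field K] where
  V : Type
  [iAG : AddCommGroup V]
  [iM : Module K V]
  [iFD : FiniteDimensional K V]
  q : QuadraticForm K V

namespace QF

variable {K : Type} [Field K]

instance (φ : QF K) : AddCommGroup φ.V := φ.iAG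
instance (φ : QF K) : Module K φ.V := φ.iM
instance (φ : QF K) : FiniteDimensional K φ.V := φ.iFD

/-- dimension of a quadratic form -/
noncomputable def dim (φ : QF K) : ℕ := Module.finrank K φ.V

/-- isometry of quadratic forms -/
def Equiv (φ ψ : QF K) : Prop := QuadraticMap.Equivalent φ.q ψ.q

/-- nondegeneracy of a quadratic form (via its polar bilinear form) -/
def Nondeg (φ : QF K) : Prop := (QuadraticMap.polarBilin φ.q).Nondegenerate

/-- scaling a quadratic form by a scalar -/
def smul (a : K) (φ : QF K) : QF K := { V := φ.V, q := a • φ.q }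

/-- orthogonal sum of quadratic forms -/
def add (φ ψ : QF K) : QF K := { V := φ.V × ψ.V, q := φ.q.prod ψ.q }

/-- the zero-dimensional quadratic form -/
noncomputable def zero : QF K := { V := Fin 0 → K, q := QuadraticMap.weightedSumSquares K (fun i : Fin 0 => (1 : K)) }

/-- the form `⟨1⟩` -/
noncomputable def one : QF K := { V := Fin 1 → K, q := QuadraticMap.weightedSumSquares K (fun _ : Fin 1 => (1 : K)) }

/-- the binary form `⟨1, -a⟩ = ⟪a⟫` -/
noncomputable def bin (a : K) : QF K :=
  { V := Fin 2 → K, q := QuadraticMap.weightedSumSquares K ![(1 : K), -a] }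

/-- tensor product of quadratic forms -/
noncomputable def tmul [Invertible (2 : K)] (φ ψ : QF K) : QF K :=
  { V := φ.V ⊗[K] ψ.V, q := QuadraticForm.tmul φ.q ψ.q }

/-- `m` copies of the hyperbolic plane `⟨1, -1⟩` -/
noncomputable def hyperbolics : ℕ → QF K
  | 0 => zero
  | m + 1 => add (bin 1) (hyperbolics m)

/-- a form is hyperbolic if it is isometric to a sum of hyperbolic planes -/
def IsHyperbolic (φ : QF K) : Prop := ∃ m : ℕ, φ.Equiv (hyperbolics m)

/-- anisotropy -/
def Anisotropic (φ : QF K) : Prop := φ.q.Anisotropic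

/-- the Witt index -/
noncomputable def wittIndex (φ : QF K) : ℕ :=
  sSup {m : ℕ | ∃ ψ : QF K, φ.Equiv (add (hyperbolics m) ψ)}

/-- a form is split if its anisotropic part has dimension at most one -/
def IsSplit (φ : QF K) : Prop :=
  ∃ (m : ℕ) (ψ : QF K), ψ.Anisotropic ∧ ψ.dim ≤ 1 ∧ φ.Equiv (add (hyperbolics m) ψ)

/-- `n`-fold orthogonal sum of a fixed form -/
noncomputable def nsmul : ℕ → QF K → QF K
  | 0, _ => zero
  | n + 1, φ => add φ (nsmul n φ)

/-- orthogonal sum of a list of forms -/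
noncomputable def sumList : List (QF K) → QF K
  | [] => zero
  | φ :: l => add φ (sumList l)

/-- the Pfister form `⟨⟨a₁, …, aₙ⟩⟩` -/
noncomputable def pfister [Invertible (2 : K)] : List K → QF K
  | [] => one
  | a :: l => tmul (bin a) (pfister l)

/-- Witt equivalence of quadratic forms -/
def WittEquiv (φ ψ : QF K) : Prop := IsHyperbolic (add φ (smul (-1) ψ))

/-- membership in the `n`-th power of the fundamental ideal: Witt equivalence
to an orthogonal sum of scaled `n`-fold Pfister forms -/
def InFundPow [Invertible (2 : K)] (n : ℕ) (φ : QF K) : Prop :=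
  ∃ (r : ℕ) (c : Fin r → K) (l : Fin r → (Fin n → K)),
    (∀ i, c i ≠ 0) ∧
    WittEquiv φ (sumList ((List.finRange r).map fun i => smul (c i) (pfister (List.ofFn (l i)))))

/-- the group of similarity factors `G(φ) = {a ∈ K× : aφ ≅ φ}`, as a set -/
def G (φ : QF K) : Set K := {a | a ≠ 0 ∧ (smul a φ).Equiv φ}

/-- similarity factors of a family of forms -/
def GT {r : ℕ} (φ : Fin r → QF K) : Set K := ⋂ i, G (φ i)

end QF

/-- a bundled field extension of `K` -/
structure FieldExt (K : Type) [Field K] where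
  carrier : Type
  [iF : Field carrier]
  [iA : Algebra K carrier]

attribute [instance] FieldExt.iF FieldExt.iA

namespace QF

variable {K : Type} [Field K]

/-- base change of a quadratic form along a field extension -/
noncomputable def baseChange [Invertible (2 : K)] (L : Type) [Field L] [Algebra K L]
    (φ : QF K) : QF L :=
  { V := L ⊗[K] φ.V, q := QuadraticForm.baseChange L φ.q }

end QF

/-- the set of nonzero norms of a finite field extension -/
def normSet (K : Type) [Field K] (L : Type) [Field L] [Algebra K L] : Set K :=
  {a | ∃ x : L, x ≠ 0 ∧ Algebra.norm K x = a}

/-- a finite `2`-extension: a tower of quadratic extensions -/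
def IsTwoExtension (K : Type) [Field K] (L : Type) [Field L] [Algebra K L] : Prop :=
  FiniteDimensional K L ∧
    ∃ (n : ℕ) (F : Fin (n + 1) → IntermediateField K L),
      F 0 = ⊥ ∧ F (Fin.last n) = ⊤ ∧
        ∀ i : Fin n, F i.castSucc ≤ F i.succ ∧
          IntermediateField.relfinrank (F i.castSucc) (F i.succ) = 2

/-- a multiquadratic extension: Galois with elementary abelian 2-group -/
def IsMultiquadratic (K : Type) [Field K] (L : Type) [Field L] [Algebra K L] : Prop :=
  FiniteDimensional K L ∧ IsGalois K L ∧ ∀ σ : L ≃ₐ[K] L, σ * σ = 1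

namespace QF

variable {K : Type} [Field K] [Invertible (2 : K)]

/-- generating set for `Hyp(φ)`: norms from finite extensions splitting `φ` -/
def hypSet (φ : QF K) : Set K :=
  {a | ∃ L : FieldExt K, FiniteDimensional K L.carrier ∧
    IsHyperbolic (baseChange L.carrier φ) ∧ a ∈ normSet K L.carrier}

/-- the subgroup `Hyp(φ)` generated by norms of finite extensions splitting `φ` -/
def Hyp (φ : QF K) : Submonoid K := Submonoid.closure (hypSet φ)

/-- generating set for `Hyp₂(φ)`: norms from finite 2-extensions splitting `φ` -/
def hypSet2 (φ : QF K) : Set K :=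
  {a | ∃ L : FieldExt K, IsTwoExtension K L.carrier ∧
    IsHyperbolic (baseChange L.carrier φ) ∧ a ∈ normSet K L.carrier}

/-- the subgroup `Hyp₂(φ)` -/
def Hyp2 (φ : QF K) : Submonoid K := Submonoid.closure (hypSet2 φ)

/-- `H(φ) = K×² · Hyp(φ)` -/
def Hgrp (φ : QF K) : Set K :=
  {x | ∃ s : K, s ≠ 0 ∧ ∃ h ∈ Hyp φ, x = s ^ 2 * h}

/-- `K×² · Hyp₂(φ)` -/
def H2grp (φ : QF K) : Set K :=
  {x | ∃ s : K, s ≠ 0 ∧ ∃ h ∈ Hyp2 φ, x = s ^ 2 * h}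

/-- the splitting pattern: the set of Witt indices over all field extensions -/
def Sp (φ : QF K) : Set ℕ :=
  {m | ∃ L : FieldExt K, m = wittIndex (baseChange L.carrier φ)}

end QF

namespace QF

variable {K : Type} [Field K] [Invertible (2 : K)]

/-- norms from finite extensions splitting all forms in a family -/
def hypSetT {r : ℕ} (φ : Fin r → QF K) : Set K :=
  {a | ∃ L : FieldExt K, FiniteDimensional K L.carrier ∧
    (∀ i, IsHyperbolic (baseChange L.carrier (φ i))) ∧ a ∈ normSet K L.carrier}

/-- the subgroup `Hyp` of a family of forms -/
def HypT {r : ℕ} (φ : Fin r → QF K) : Submonoid K := Submonoid.closure (hypSetT φ)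

/-- norms from finite 2-extensions splitting all forms in a family -/
def hypSet2T {r : ℕ} (φ : Fin r → QF K) : Set K :=
  {a | ∃ L : FieldExt K, IsTwoExtension K L.carrier ∧
    (∀ i, IsHyperbolic (baseChange L.carrier (φ i))) ∧ a ∈ normSet K L.carrier}

/-- the subgroup `Hyp₂` of a family of forms -/
def Hyp2T {r : ℕ} (φ : Fin r → QF K) : Submonoid K := Submonoid.closure (hypSet2T φ)

/-- `H` of a family of forms: `K×² · Hyp` -/
def HgrpT {r : ℕ} (φ : Fin r → QF K) : Set K :=
  {x | ∃ s : K, s ≠ 0 ∧ ∃ h ∈ HypT φ, x = s ^ 2 * h}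

end QF

/-- the map `O → O'` between valuation rings induced by a compatible field embedding -/
def liftVSHom {K M : Type} [Field K] [Field M] [Algebra K M]
    (O : ValuationSubring K) (OM : ValuationSubring M)
    (hc : ∀ x : K, x ∈ O ↔ algebraMap K M x ∈ OM) : O →+* OM where
  toFun x := ⟨algebraMap K M x, (hc x).1 x.2⟩
  map_one' := by ext; simp
  map_mul' x y := by ext; simp
  map_zero' := by ext; simp
  map_add' x y := by ext; simp

/-- `v` is unramified in the subextension `E` of `M/K`: the value group does not grow
and the residue field extension is separable (every residue is a simple root of a
separable polynomial over the residue field of `O`) -/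
def UnramifiedIn {K M : Type} [Field K] [Field M] [Algebra K M]
    (O : ValuationSubring K) (OM : ValuationSubring M)
    (hc : ∀ x : K, x ∈ O ↔ algebraMap K M x ∈ OM) (E : IntermediateField K M) : Prop :=
  (∀ y : M, y ∈ E → y ≠ 0 →
      ∃ x : K, x ≠ 0 ∧ OM.valuation y = OM.valuation (algebraMap K M x)) ∧
  (∀ y : M, y ∈ E → ∀ hy : y ∈ OM, ∃ p : Polynomial O, p.Monic ∧
      (p.map (IsLocalRing.residue O)).Separable ∧
      Polynomial.eval (⟨y, hy⟩ : OM) (p.map (liftVSHom O OM hc)) ∈ IsLocalRing.maximalIdeal OM)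

/-- the value group of a valuation, as a subgroup of the units of the codomain -/
def unitsValueGroup {L Γ : Type} [Field L] [LinearOrderedCommGroupWithZero Γ]
    (w : Valuation L Γ) : Subgroup Γˣ :=
  (Units.map w.toMonoidWithZeroHom.toMonoidHom).range

/-- iterated Laurent series field, bundled with its field structure -/
noncomputable def IterLaurentP (k : Type) [Field k] : ℕ → Σ' (T : Type), Field T :=
  fun n => Nat.rec ⟨k, ‹Field k›⟩
    (fun _ p => by letI := p.2; exact ⟨LaurentSeries p.1, inferInstance⟩) n

/-- iterated Laurent series field `k((t₁))…((tₙ))` -/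
@[reducible] noncomputable def IterLaurent (k : Type) [Field k] (n : ℕ) : Type :=
  (IterLaurentP k n).1

noncomputable instance (k : Type) [Field k] (n : ℕ) : Field (IterLaurent k n) :=
  (IterLaurentP k n).2

/-- the embedding of the coefficient field in the iterated Laurent series field -/
noncomputable def iterC (k : Type) [Field k] : ∀ n, k →+* IterLaurent k n
  | 0 => RingHom.id k
  | n + 1 => (HahnSeries.C : IterLaurent k n →+* LaurentSeries (IterLaurent k n)).comp (iterC k n)

/-- the variables `t₁, …, tₙ` of the iterated Laurent series field -/
noncomputable def tvar (k : Type) [Field k] : ∀ n, Fin n → IterLaurent k n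
  | 0 => fun i => i.elim0
  | n + 1 => fun i =>
      (Fin.lastCases (motive := fun _ => LaurentSeries (IterLaurent k n))
        (HahnSeries.single 1 1) (fun j => HahnSeries.C (tvar k n j)) i : IterLaurent k (n + 1))

lemma norm_quad_aux {R A : Type*} [CommRing R] [CommRing A] [Algebra R A]
    (B : Module.Basis (Fin 2) R A) (hB0 : B 0 = 1) {a : R}
    (hB1 : B 1 * B 1 = algebraMap R A a) (p q : R) :
    Algebra.norm R (algebraMap R A p + q • B 1) = p ^ 2 - a * q ^ 2 := by
  classical
  set x : A := algebraMap R A p + q • B 1 with hxdef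
  have k0 : x * B 0 = p • B 0 + q • B 1 := by
    rw [hB0, mul_one, hxdef]
    rw [Algebra.algebraMap_eq_smul_one, ← hB0]
  have k1 : x * B 1 = (a * q) • B 0 + p • B 1 := by
    rw [hxdef, hB0]
    simp only [Algebra.smul_def, map_mul, mul_one]
    linear_combination (algebraMap R A q) * hB1
  rw [Algebra.norm_eq_matrix_det B, Matrix.det_fin_two]
  have e00 : Algebra.leftMulMatrix B x 0 0 = p := by
    rw [Algebra.leftMulMatrix_eq_repr_mul, k0]
    simp [Module.Basis.repr_self_apply]
  have e01 : Algebra.leftMulMatrix B x 0 1 = a * q := by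
    rw [Algebra.leftMulMatrix_eq_repr_mul, k1]
    simp [Module.Basis.repr_self_apply]
  have e10 : Algebra.leftMulMatrix B x 1 0 = q := by
    rw [Algebra.leftMulMatrix_eq_repr_mul, k0]
    simp [Module.Basis.repr_self_apply]
  have e11 : Algebra.leftMulMatrix B x 1 1 = p := by
    rw [Algebra.leftMulMatrix_eq_repr_mul, k1]
    simp [Module.Basis.repr_self_apply]
  rw [e00, e01, e10, e11]
  ring

lemma exists_quad_basis {K L : Type*} [Field K] [Field L] [Algebra K L]
    (hK : (2 : K) ≠ 0) (h2 : Module.finrank K L = 2) :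
    ∃ (a : K) (B : Module.Basis (Fin 2) K L), a ≠ 0 ∧ B 0 = 1 ∧
      B 1 * B 1 = algebraMap K L a := by
  classical
  haveI : FiniteDimensional K L := FiniteDimensional.of_finrank_pos (by omega)
  obtain ⟨β, hβ⟩ : ∃ β : L, β ∉ Submodule.span K {(1 : L)} := by
    by_contra h
    push_neg at h
    have htop : Submodule.span K {(1 : L)} = ⊤ := by
      rw [Submodule.eq_top_iff']; exact h
    have h1 : Module.finrank K L = 1 := by
      rw [← finrank_top K L, ← htop, finrank_span_singleton (one_ne_zero)]
    omega
  have indep : ∀ γ : L, γ ∉ Submodule.span K {(1 : L)} →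
      LinearIndependent K ![(1 : L), γ] := by
    intro γ hγ
    rw [LinearIndependent.pair_iff]
    intro s t hst
    by_cases ht : t = 0
    · subst ht
      rw [zero_smul, add_zero] at hst
      rcases smul_eq_zero.1 hst with h | h
      · exact ⟨h, rfl⟩
      · exact absurd h one_ne_zero
    · exfalso
      apply hγ
      have h1 : t • γ = -(s • (1 : L)) := eq_neg_of_add_eq_zero_right hst
      have hγeq : γ = t⁻¹ • (-(s • (1 : L))) := by
        rw [← h1, smul_smul, inv_mul_cancel₀ ht, one_smul]
      rw [hγeq]
      exact Submodule.smul_mem _ _ (Submodule.neg_mem _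
        (Submodule.smul_mem _ _ (Submodule.mem_span_singleton_self _)))
  have card2 : Fintype.card (Fin 2) = Module.finrank K L := by simp [h2]
  let B' : Module.Basis (Fin 2) K L :=
    basisOfLinearIndependentOfCardEqFinrank (indep β hβ) card2
  have hB' : ⇑B' = ![(1 : L), β] :=
    coe_basisOfLinearIndependentOfCardEqFinrank _ _
  set c₀ : K := B'.repr (β * β) 0 with hc₀
  set c₁ : K := B'.repr (β * β) 1 with hc₁
  have hββ : β * β = algebraMap K L c₀ + algebraMap K L c₁ * β := by
    conv_lhs => rw [← B'.sum_repr (β * β)]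
    rw [Fin.sum_univ_two, ← hc₀, ← hc₁, Algebra.smul_def, Algebra.smul_def]
    have h0 : B' 0 = 1 := by rw [hB']; rfl
    have h1 : B' 1 = β := by rw [hB']; rfl
    rw [h0, h1, mul_one]
  set α : L := β - algebraMap K L (c₁ / 2) with hαdef
  set a : K := c₀ + (c₁ / 2) ^ 2 with hadef
  have hAc₁ : algebraMap K L c₁ = 2 * algebraMap K L (c₁ / 2) := by
    rw [(map_ofNat (algebraMap K L) 2).symm, ← map_mul]
    congr 1
    field_simp
  have hαsq : α * α = algebraMap K L a := by
    rw [hαdef, hadef, map_add, map_pow]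
    linear_combination hββ + β * hAc₁
  have hαnot : α ∉ Submodule.span K {(1 : L)} := by
    intro hmem
    apply hβ
    have hβeq : β = α + algebraMap K L (c₁ / 2) := by rw [hαdef]; ring
    rw [hβeq]
    refine Submodule.add_mem _ hmem ?_
    rw [Algebra.algebraMap_eq_smul_one]
    exact Submodule.smul_mem _ _ (Submodule.mem_span_singleton_self _)
  have ha : a ≠ 0 := by
    intro ha0
    apply hαnot
    have h0 : α * α = 0 := by rw [hαsq, ha0, map_zero]
    have hα0 : α = 0 := by
      rcases mul_eq_zero.1 h0 with h | h <;> exact h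
    rw [hα0]
    exact Submodule.zero_mem _
  let B : Module.Basis (Fin 2) K L :=
    basisOfLinearIndependentOfCardEqFinrank (indep α hαnot) card2
  have hB : ⇑B = ![(1 : L), α] :=
    coe_basisOfLinearIndependentOfCardEqFinrank _ _
  refine ⟨a, B, ha, ?_, ?_⟩
  · rw [hB]; rfl
  · have h1 : B 1 = α := by rw [hB]; rfl
    rw [h1]; exact hαsq

lemma normSet_rep {K L : Type} [Field K] [Field L] [Algebra K L]
    (B : Module.Basis (Fin 2) K L) (hB0 : B 0 = 1) {a : K}
    (hB1 : B 1 * B 1 = algebraMap K L a)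
    {c : K} (hc : c ∈ normSet K L) : c ≠ 0 ∧ ∃ p q : K, c = p ^ 2 - a * q ^ 2 := by
  obtain ⟨x, hx0, hxc⟩ := hc
  constructor
  · rw [← hxc]
    exact ((isUnit_iff_ne_zero.2 hx0).map (Algebra.norm K)).ne_zero
  · refine ⟨B.repr x 0, B.repr x 1, ?_⟩
    have hx : x = algebraMap K L (B.repr x 0) + B.repr x 1 • B 1 := by
      conv_lhs => rw [← B.sum_repr x]
      rw [Fin.sum_univ_two, hB0, Algebra.algebraMap_eq_smul_one]
    have hN := norm_quad_aux B hB0 hB1 (B.repr x 0) (B.repr x 1)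
    rw [← hx] at hN
    rw [← hxc, hN]

lemma sep_of_finrank_four {K T : Type*} [Field K] [Field T] [Algebra K T]
    (hK : (2 : K) ≠ 0) [FiniteDimensional K T] (h4 : Module.finrank K T = 4) :
    Algebra.IsSeparable K T := by
  constructor
  intro x
  have hint : IsIntegral K x := IsIntegral.of_finite K x
  have hirr := minpoly.irreducible hint
  show (minpoly K x).Separable
  rw [Polynomial.separable_iff_derivative_ne_zero hirr]
  intro hd
  have hdvd := minpoly.degree_dvd hint
  rw [h4] at hdvd
  set n := (minpoly K x).natDegree with hn
  have hn0 : 0 < n := minpoly.natDegree_pos hint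
  have hco : (Polynomial.derivative (minpoly K x)).coeff (n - 1) = 0 := by
    rw [hd]; simp
  rw [Polynomial.coeff_derivative] at hco
  have hn1 : n - 1 + 1 = n := Nat.succ_pred_eq_of_pos hn0
  rw [hn1] at hco
  have hlead : (minpoly K x).coeff n = 1 := by
    have := (minpoly.monic hint).leadingCoeff
    rwa [Polynomial.leadingCoeff] at this
  rw [hlead, one_mul] at hco
  -- hco : ((n - 1 : ℕ) : K) + 1 = 0
  have hcast : ((n : ℕ) : K) = 0 := by
    have he : (((n - 1 : ℕ) : K) + 1) = ((n : ℕ) : K) := by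
      rw [Nat.cast_sub hn0]
      ring
    rw [← he, hco]
  have hn4 : n ≤ 4 := Nat.le_of_dvd (by norm_num) hdvd
  interval_cases n
  · exact one_ne_zero (α := K) (by exact_mod_cast hcast)
  · exact hK (by exact_mod_cast hcast)
  · exact absurd hdvd (by norm_num)
  · refine hK ?_
    have h4K : ((4 : ℕ) : K) = 0 := hcast
    push_cast at h4K
    have h22 : (2 : K) * 2 = 0 := by linear_combination h4K
    rcases mul_eq_zero.1 h22 with h | h <;> exact h

set_option maxHeartbeats 2000000 in
/-- the biquadratic norm trick:
`K×² · N_{L/K}(L×) = N_{L₁/K}(L₁×) ∩ N_{L₂/K}(L₂×)` for `L = L₁ ⊗_K L₂`. -/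
theorem stmt3 (K : Type) [Field K] (hK : (2 : K) ≠ 0)
    (L₁ L₂ : Type) [Field L₁] [Field L₂] [Algebra K L₁] [Algebra K L₂]
    (h₁ : Module.finrank K L₁ = 2) (h₂ : Module.finrank K L₂ = 2)
    (hdisj : IsField (L₁ ⊗[K] L₂)) :
    {x : K | ∃ s : K, s ≠ 0 ∧ ∃ y : L₁ ⊗[K] L₂, IsUnit y ∧ x = s ^ 2 * Algebra.norm K y}
      = normSet K L₁ ∩ normSet K L₂ := by
  classical
  have hK₂ : (2 : K) ≠ 0 := hK
  haveI : FiniteDimensional K L₁ := FiniteDimensional.of_finrank_pos (by omega)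
  haveI : FiniteDimensional K L₂ := FiniteDimensional.of_finrank_pos (by omega)
  letI : Field (L₁ ⊗[K] L₂) := hdisj.toField
  haveI : FiniteDimensional K (L₁ ⊗[K] L₂) := Module.Finite.tensorProduct K L₁ L₂
  have h4 : Module.finrank K (L₁ ⊗[K] L₂) = 4 := by
    rw [Module.finrank_tensorProduct, h₁, h₂]
  haveI : Algebra.IsSeparable K (L₁ ⊗[K] L₂) := sep_of_finrank_four hK h4
  letI : Algebra L₂ (L₁ ⊗[K] L₂) := Algebra.TensorProduct.rightAlgebra
  haveI : IsScalarTower K L₁ (L₁ ⊗[K] L₂) :=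
    IsScalarTower.of_algebraMap_eq fun r => rfl
  haveI : IsScalarTower K L₂ (L₁ ⊗[K] L₂) :=
    Algebra.TensorProduct.right_isScalarTower
  obtain ⟨a, B₁, ha, hB₁0, hB₁1⟩ := exists_quad_basis hK h₁
  obtain ⟨b, B₂, hb, hB₂0, hB₂1⟩ := exists_quad_basis hK h₂
  ext c
  simp only [Set.mem_setOf_eq, Set.mem_inter_iff]
  constructor
  · rintro ⟨s, hs, y, hy, rfl⟩
    constructor
    · refine ⟨algebraMap K L₁ s * Algebra.norm L₁ y,
        mul_ne_zero ((map_ne_zero_iff _ (algebraMap K L₁).injective).2 hs)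
          (hy.map (Algebra.norm L₁)).ne_zero, ?_⟩
      rw [map_mul, Algebra.norm_algebraMap, h₁, Algebra.norm_norm]
    · refine ⟨algebraMap K L₂ s * Algebra.norm L₂ y,
        mul_ne_zero ((map_ne_zero_iff _ (algebraMap K L₂).injective).2 hs)
          (hy.map (Algebra.norm L₂)).ne_zero, ?_⟩
      rw [map_mul, Algebra.norm_algebraMap, h₂, Algebra.norm_norm]
  · rintro ⟨hc₁, hc₂⟩
    obtain ⟨hc0, p, q, hpq⟩ := normSet_rep B₁ hB₁0 hB₁1 hc₁
    obtain ⟨-, r, s₀, hrs⟩ := normSet_rep B₂ hB₂0 hB₂1 hc₂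
    by_cases hq0 : q = 0
    · refine ⟨p, fun hp0 => hc0 (by rw [hpq, hp0, hq0]; ring), 1, isUnit_one, ?_⟩
      rw [map_one, hpq, hq0]; ring
    by_cases hs0 : s₀ = 0
    · refine ⟨r, fun hr0 => hc0 (by rw [hrs, hr0, hs0]; ring), 1, isUnit_one, ?_⟩
      rw [map_one, hrs, hs0]; ring
    -- basic objects
    set α : L₁ := B₁ 1 with hα
    set β : L₂ := B₂ 1 with hβ
    set C : Module.Basis (Fin 2) L₁ (L₁ ⊗[K] L₂) := B₂.baseChange L₁ with hC
    have hC0 : C 0 = 1 := by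
      rw [hC, Module.Basis.baseChange_apply, hB₂0, Algebra.TensorProduct.one_def]
    have hC1 : C 1 * C 1 = algebraMap L₁ (L₁ ⊗[K] L₂) (algebraMap K L₁ b) := by
      rw [hC, Module.Basis.baseChange_apply, Algebra.TensorProduct.tmul_mul_tmul, one_mul, ← hβ, hB₂1,
        ← IsScalarTower.algebraMap_apply]
      exact (Algebra.TensorProduct.algebraMap_apply' b).symm
    have hreprC : ∀ (u : L₁) (v : L₁),
        (C.repr (algebraMap L₁ (L₁ ⊗[K] L₂) u + v • C 1)) 1 = v := by
      intro u v
      have h1 : algebraMap L₁ (L₁ ⊗[K] L₂) u = u • C 0 := by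
        rw [hC0, Algebra.algebraMap_eq_smul_one]
      rw [h1, map_add, map_smul, map_smul, Finsupp.add_apply, Finsupp.smul_apply,
        Finsupp.smul_apply, Module.Basis.repr_self_apply, Module.Basis.repr_self_apply]
      simp
    -- choose sign of r
    obtain ⟨r', hpr, hrs'⟩ : ∃ r' : K, p + r' ≠ 0 ∧ c = r' ^ 2 - b * s₀ ^ 2 := by
      by_cases hpr : p + r ≠ 0
      · exact ⟨r, hpr, hrs⟩
      by_cases hpr' : p + -r ≠ 0
      · exact ⟨-r, hpr', by rw [hrs]; ring⟩
      exfalso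
      push_neg at hpr hpr'
      have hp0 : p = 0 := by
        have h2p : 2 * p = 0 := by linear_combination hpr + hpr'
        rcases mul_eq_zero.1 h2p with h | h
        · exact absurd h hK
        · exact h
      have hr0 : r = 0 := by linear_combination hpr - hp0
      have key : a * q ^ 2 = b * s₀ ^ 2 := by
        rw [hp0] at hpq; rw [hr0] at hrs
        linear_combination hpq - hrs
      set e : K := a * q / s₀ with hedef
      have he0 : e ≠ 0 := div_ne_zero (mul_ne_zero ha hq0) hs0
      have he2 : e ^ 2 = a * b := by
        rw [hedef, div_pow, div_eq_iff (pow_ne_zero 2 hs0)]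
        linear_combination a * key
      set w : L₁ ⊗[K] L₂ := α ⊗ₜ[K] β with hw
      have hww : w * w = algebraMap K (L₁ ⊗[K] L₂) a * algebraMap K (L₁ ⊗[K] L₂) b := by
        have h1 : w * w = (α * α) ⊗ₜ[K] (β * β) := Algebra.TensorProduct.tmul_mul_tmul _ _ _ _
        rw [h1, hB₁1, hB₂1, Algebra.TensorProduct.algebraMap_apply,
          Algebra.TensorProduct.algebraMap_apply', Algebra.TensorProduct.tmul_mul_tmul,
          mul_one, one_mul]
      have hE : algebraMap K (L₁ ⊗[K] L₂) e * algebraMap K (L₁ ⊗[K] L₂) e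
          = algebraMap K (L₁ ⊗[K] L₂) a * algebraMap K (L₁ ⊗[K] L₂) b := by
        rw [← map_mul, ← map_mul]
        congr 1
        linear_combination he2
      have hfac : (w - algebraMap K (L₁ ⊗[K] L₂) e) * (w + algebraMap K (L₁ ⊗[K] L₂) e) = 0 := by
        linear_combination hww - hE
      have hα0 : α ≠ 0 := by
        intro h0
        apply ha
        have : algebraMap K L₁ a = 0 := by rw [← hB₁1, h0, mul_zero]
        exact (map_eq_zero_iff _ (algebraMap K L₁).injective).1 this
      have hwrepr : ∀ t : K, C.repr (w + algebraMap K (L₁ ⊗[K] L₂) t) 1 = α := by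
        intro t
        have h1 : w = α • C 1 := by
          rw [hC, Module.Basis.baseChange_apply, hw, ← hβ]
          rw [TensorProduct.smul_tmul', smul_eq_mul, mul_one]
        have h2 : algebraMap K (L₁ ⊗[K] L₂) t
            = algebraMap L₁ (L₁ ⊗[K] L₂) (algebraMap K L₁ t) :=
          IsScalarTower.algebraMap_apply K L₁ _ t
        have h3 : algebraMap L₁ (L₁ ⊗[K] L₂) (algebraMap K L₁ t)
            = (algebraMap K L₁ t) • C 0 := by
          rw [hC0, Algebra.algebraMap_eq_smul_one]
        rw [h1, h2, h3, map_add, map_smul, map_smul, Finsupp.add_apply, Finsupp.smul_apply,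
          Finsupp.smul_apply, Module.Basis.repr_self_apply, Module.Basis.repr_self_apply]
        simp
      rcases mul_eq_zero.1 hfac with h | h
      · have : C.repr (w - algebraMap K (L₁ ⊗[K] L₂) e) 1 = α := by
          have := hwrepr (-e)
          rw [map_neg] at this
          rw [sub_eq_add_neg]
          exact this
        rw [h, map_zero] at this
        exact hα0 (by rw [← this]; rfl)
      · have : C.repr (w + algebraMap K (L₁ ⊗[K] L₂) e) 1 = α := hwrepr e
        rw [h, map_zero] at this
        exact hα0 (by rw [← this]; rfl)
    -- main construction
    set x₁ : L₁ := algebraMap K L₁ p + q • α with hx₁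
    have hNx₁ : Algebra.norm K x₁ = c := by
      rw [hx₁, hα, norm_quad_aux B₁ hB₁0 hB₁1, ← hpq]
    set u : L₁ := x₁ + algebraMap K L₁ r' with hu
    set y : L₁ ⊗[K] L₂ :=
      algebraMap L₁ (L₁ ⊗[K] L₂) u + (algebraMap K L₁ s₀) • C 1 with hy
    have hNy : Algebra.norm L₁ y = u ^ 2 - algebraMap K L₁ b * algebraMap K L₁ s₀ ^ 2 := by
      rw [hy]
      exact norm_quad_aux C hC0 hC1 u (algebraMap K L₁ s₀)
    have hx₁sq : x₁ * x₁ = 2 * algebraMap K L₁ p * x₁ - algebraMap K L₁ c := by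
      rw [hx₁, hpq]
      simp only [map_sub, map_mul, map_pow, Algebra.smul_def]
      linear_combination (algebraMap K L₁ q * algebraMap K L₁ q) * hB₁1
    have hcL : algebraMap K L₁ c
        = algebraMap K L₁ r' ^ 2 - algebraMap K L₁ b * algebraMap K L₁ s₀ ^ 2 := by
      rw [hrs']
      simp only [map_sub, map_mul, map_pow]
    have hNy2 : Algebra.norm L₁ y = algebraMap K L₁ (2 * (p + r')) * x₁ := by
      rw [hNy, hu]
      simp only [map_mul, map_add, map_ofNat]
      linear_combination hx₁sq - hcL
    have hkey : Algebra.norm K y = (2 * (p + r')) ^ 2 * c := by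
      rw [← Algebra.norm_norm (R := K) (S := L₁) (a := y), hNy2, map_mul, Algebra.norm_algebraMap, h₁, hNx₁]
    have hk0 : 2 * (p + r') ≠ 0 := mul_ne_zero hK hpr
    have hy0 : y ≠ 0 := by
      intro h0
      have h1 : C.repr y 1 = algebraMap K L₁ s₀ := by
        rw [hy]; exact hreprC u (algebraMap K L₁ s₀)
      rw [h0, map_zero] at h1
      exact ((map_ne_zero_iff _ (algebraMap K L₁).injective).2 hs0) (by rw [← h1]; rfl)
    refine ⟨(2 * (p + r'))⁻¹, inv_ne_zero hk0, y, isUnit_iff_ne_zero.2 hy0, ?_⟩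
    rw [hkey]
    field_simp
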